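/- Let X_1,…,X_n be i.i.d. real random variables with distribution Q and mean μ = E_Q[X_1], and suppose that for some b > 0, E_Q[exp(θ(X_1 − μ))] ≤ b for all θ ∈ [−1, 1]. Then for every ε > 0, P_Q( (1/n)·∑_{i=1}^n (X_i − μ) ≥ ε ) ≤ exp(−ε²n/(8b)) + exp(−εn/4). -/

import Mathlib

/-!
Write `Y = X₁ - μ`. A second-order expansion of the exponential whose quadratic term is absorbed
into `e^Y` and `e^{-Y}` gives, for `0 ≤ θ ≤ 1/2`,
`E e^{θY} ≤ 1 + θ² e^{-2} (8 E e^Y + 2 E e^{-Y}) ≤ 1 + 2bθ² ≤ e^{2bθ²}`.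
The Chernoff bound for the independent sum then gives `P(∑ Yᵢ ≥ nε) ≤ exp(n(2bθ² - θε))`,
and the choices `θ = ε/(4b)` (when `ε ≤ 2b`) and `θ = 1/2` (otherwise) give the two terms.
-/

open MeasureTheory ProbabilityTheory

namespace Real

lemma sq_le_four_mul_exp_sub_two {t : ℝ} (ht : 0 ≤ t) : t ^ 2 ≤ 4 * exp (t - 2) := by
  have h := add_one_le_exp (t / 2 - 1)
  have hsq : exp (t / 2 - 1) ^ 2 = exp (t - 2) := by rw [← exp_nat_mul]; ring_nf
  nlinarith

lemma exp_le_quadratic_of_nonpos {x : ℝ} (hx : x ≤ 0) : exp x ≤ 1 + x + x ^ 2 / 2 := by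
  have hmono : Monotone fun y => exp y - (1 + y + y ^ 2 / 2) :=
    monotone_of_hasDerivAt_nonneg (f' := fun y => exp y - (y + 1))
      (fun y => ((hasDerivAt_exp y).sub (((hasDerivAt_id y).const_add 1).add
        ((hasDerivAt_pow 2 y).div_const 2))).congr_deriv (by simp; ring))
      (fun y => sub_nonneg.2 (add_one_le_exp y))
  simpa using hmono hx

lemma exp_le_one_add_add_sq_div_two_mul_exp {x : ℝ} (hx : 0 ≤ x) :
    exp x ≤ 1 + x + x ^ 2 / 2 * exp x := by
  have hmono : Monotone fun y => (1 + y) * exp (-y) + y ^ 2 / 2 :=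
    monotone_of_hasDerivAt_nonneg (f' := fun y => y * (1 - exp (-y)))
      (fun y => ((((hasDerivAt_id y).const_add 1).mul (hasDerivAt_neg y).exp).add
        ((hasDerivAt_pow 2 y).div_const 2)).congr_deriv (by simp; ring))
      (fun y => by
        rcases le_total 0 y with hy | hy
        · exact mul_nonneg hy (sub_nonneg.2 (exp_le_one_iff.2 (neg_nonpos.2 hy)))
        · exact mul_nonneg_of_nonpos_of_nonpos hy (sub_nonpos.2 (one_le_exp (neg_nonneg.2 hy))))
  have h : 1 ≤ (1 + x) * exp (-x) + x ^ 2 / 2 := by simpa using hmono hx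
  have hmul : exp x * exp (-x) = 1 := by rw [← exp_add]; simp
  nlinarith [exp_pos x]

lemma exp_mul_le_of_nonneg_of_le_half {θ : ℝ} (h0 : 0 ≤ θ) (h1 : θ ≤ 1 / 2) (y : ℝ) :
    exp (θ * y) ≤ 1 + θ * y + θ ^ 2 * exp (-2) * (8 * exp y + 2 * exp (-y)) := by
  have hθ2 : 0 ≤ θ ^ 2 * exp (-2) := by positivity
  rcases le_total y 0 with hy | hy
  · have hsq : y ^ 2 ≤ 4 * (exp (-2) * exp (-y)) := by
      rw [← exp_add, ← neg_sq, add_comm, ← sub_eq_add_neg]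
      exact sq_le_four_mul_exp_sub_two (neg_nonneg.2 hy)
    calc exp (θ * y) ≤ 1 + θ * y + θ ^ 2 * y ^ 2 / 2 :=
          (exp_le_quadratic_of_nonpos (mul_nonpos_of_nonneg_of_nonpos h0 hy)).trans_eq (by ring)
      _ ≤ 1 + θ * y + θ ^ 2 * (4 * (exp (-2) * exp (-y))) / 2 := by gcongr
      _ ≤ 1 + θ * y + θ ^ 2 * exp (-2) * (8 * exp y + 2 * exp (-y)) := by
          nlinarith [mul_nonneg hθ2 (exp_pos y).le]
  · have hsq : y ^ 2 ≤ 16 * exp (y / 2 - 2) := by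
      nlinarith [sq_le_four_mul_exp_sub_two (div_nonneg hy zero_le_two)]
    have hexp : exp (θ * y) ≤ exp (y / 2) := exp_le_exp.2 (by nlinarith)
    calc exp (θ * y) ≤ 1 + θ * y + θ ^ 2 / 2 * (y ^ 2 * exp (θ * y)) :=
          (exp_le_one_add_add_sq_div_two_mul_exp (mul_nonneg h0 hy)).trans_eq (by ring)
      _ ≤ 1 + θ * y + θ ^ 2 / 2 * (16 * exp (y / 2 - 2) * exp (y / 2)) := by gcongr
      _ = 1 + θ * y + θ ^ 2 * exp (-2) * (8 * exp y) := by
          rw [mul_assoc 16, ← exp_add, show y / 2 - 2 + y / 2 = -2 + y by ring, exp_add]; ring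
      _ ≤ 1 + θ * y + θ ^ 2 * exp (-2) * (8 * exp y + 2 * exp (-y)) := by
          gcongr; linarith [exp_pos (-y)]

lemma exp_neg_two_le : exp (-2) ≤ 1 / 5 := by
  rw [exp_neg, one_div]
  refine inv_anti₀ (by norm_num) ?_
  linarith [quadratic_le_exp_of_nonneg (zero_le_two : (0 : ℝ) ≤ 2)]

lemma exists_mem_Icc_quadratic_le_max {b ε : ℝ} (hb : 0 < b) (hε : 0 < ε) :
    ∃ θ ∈ Set.Icc (0 : ℝ) (1 / 2), 2 * b * θ ^ 2 - θ * ε ≤ max (-ε ^ 2 / (8 * b)) (-ε / 4) := by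
  rcases le_total ε (2 * b) with hεb | hεb
  · refine ⟨ε / (4 * b), ⟨by positivity, by rw [div_le_iff₀ (by positivity)]; linarith⟩,
      le_max_of_le_left (le_of_eq ?_)⟩
    field_simp
    ring
  · exact ⟨1 / 2, ⟨by norm_num, le_rfl⟩, le_max_of_le_right (by linarith)⟩

end Real

open Real

lemma Finset.sum_Icc_one_eq_sum_fin {M : Type*} [AddCommMonoid M] (f : ℕ → M) (n : ℕ) :
    ∑ i ∈ Finset.Icc 1 n, f i = ∑ i : Fin n, f (i + 1) := by
  rw [Fin.sum_univ_eq_sum_range (fun i => f (i + 1)), Finset.range_eq_Ico, Finset.sum_Ico_add',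
    zero_add, Finset.Ico_add_one_right_eq_Icc]

section
variable {Ω : Type*} {mΩ : MeasurableSpace Ω} {Q : Measure Ω}

lemma integrable_and_integral_le_of_lintegral_ofReal_le {f : Ω → ℝ}
    (hf : AEStronglyMeasurable f Q) (hf0 : 0 ≤ᵐ[Q] f) {b : ℝ} (hb : 0 ≤ b)
    (h : ∫⁻ ω, ENNReal.ofReal (f ω) ∂Q ≤ ENNReal.ofReal b) :
    Integrable f Q ∧ ∫ ω, f ω ∂Q ≤ b :=
  ⟨⟨hf, (hasFiniteIntegral_iff_ofReal hf0).2 (h.trans_lt ENNReal.ofReal_lt_top)⟩,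
    (integral_eq_lintegral_of_nonneg_ae hf0 hf).trans_le (ENNReal.toReal_le_of_le_ofReal hb h)⟩

lemma mgf_le_exp_two_mul_sq [IsProbabilityMeasure Q] {Y : Ω → ℝ} (hY : Integrable Y Q)
    (hY0 : ∫ ω, Y ω ∂Q = 0) {b : ℝ}
    (hpos : Integrable (fun ω => exp (Y ω)) Q) (hneg : Integrable (fun ω => exp (-Y ω)) Q)
    (hpos_le : ∫ ω, exp (Y ω) ∂Q ≤ b) (hneg_le : ∫ ω, exp (-Y ω) ∂Q ≤ b)
    {θ : ℝ} (h0 : 0 ≤ θ) (h1 : θ ≤ 1 / 2) :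
    mgf Y Q θ ≤ exp (2 * b * θ ^ 2) := by
  have hint : Integrable (fun ω => exp (θ * Y ω)) Q :=
    integrable_exp_mul_of_le_of_le (a := -1) (b := 1) (by simpa using hneg) (by simpa using hpos)
      (by linarith) (by linarith)
  have hlin : Integrable (fun ω => 1 + θ * Y ω) Q := (integrable_const 1).add (hY.const_mul θ)
  have hrem : Integrable (fun ω => θ ^ 2 * exp (-2) * (8 * exp (Y ω) + 2 * exp (-Y ω))) Q :=
    ((hpos.const_mul 8).add (hneg.const_mul 2)).const_mul _
  calc mgf Y Q θ
      ≤ ∫ ω, (1 + θ * Y ω + θ ^ 2 * exp (-2) * (8 * exp (Y ω) + 2 * exp (-Y ω))) ∂Q :=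
        integral_mono hint (hlin.add hrem) fun ω => exp_mul_le_of_nonneg_of_le_half h0 h1 (Y ω)
    _ = 1 + θ ^ 2 * exp (-2) * (8 * ∫ ω, exp (Y ω) ∂Q + 2 * ∫ ω, exp (-Y ω) ∂Q) := by
        rw [integral_add hlin hrem, integral_add (integrable_const 1) (hY.const_mul θ),
          integral_const_mul, integral_const_mul,
          integral_add (hpos.const_mul 8) (hneg.const_mul 2),
          integral_const_mul, integral_const_mul, hY0]
        simp
    _ ≤ 1 + θ ^ 2 * (1 / 5) * (10 * b) := by
        gcongr
        · exact exp_neg_two_le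
        · linarith
    _ = 1 + 2 * b * θ ^ 2 := by ring
    _ ≤ exp (2 * b * θ ^ 2) := by linarith [add_one_le_exp (2 * b * θ ^ 2)]

lemma measureReal_sum_ge_le_of_mgf_le {ι : Type*} {X : ι → Ω → ℝ} (hindep : iIndepFun X Q)
    (hmeas : ∀ i, Measurable (X i)) (s : Finset ι) (a : ℝ) {θ M : ℝ} (hθ : 0 ≤ θ)
    (hint : ∀ i ∈ s, Integrable (fun ω => exp (θ * X i ω)) Q)
    (hM : ∀ i ∈ s, mgf (X i) Q θ ≤ M) :
    Q.real {ω | a ≤ ∑ i ∈ s, X i ω} ≤ exp (-θ * a) * M ^ s.card := by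
  have := hindep.isProbabilityMeasure
  calc Q.real {ω | a ≤ ∑ i ∈ s, X i ω}
      ≤ exp (-θ * a) * mgf (∑ i ∈ s, X i) Q θ := by
        simpa only [Finset.sum_apply] using
          measure_ge_le_exp_mul_mgf a hθ (hindep.integrable_exp_mul_sum hmeas hint)
    _ = exp (-θ * a) * ∏ i ∈ s, mgf (X i) Q θ := by rw [hindep.mgf_sum hmeas]
    _ ≤ exp (-θ * a) * M ^ s.card := by
        gcongr
        exact (Finset.prod_le_prod (fun i _ => mgf_nonneg) hM).trans_eq (Finset.prod_const M)

lemma measureReal_sum_ge_le_of_mgf_le_exp_sq {ι : Type*} {X : ι → Ω → ℝ}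
    (hindep : iIndepFun X Q) (hmeas : ∀ i, Measurable (X i)) (s : Finset ι) {b ε : ℝ}
    (hb : 0 < b) (hε : 0 < ε) (hint : ∀ i ∈ s, Integrable (fun ω => exp (1 / 2 * X i ω)) Q)
    (hmgf : ∀ i ∈ s, ∀ θ ∈ Set.Icc (0 : ℝ) (1 / 2), mgf (X i) Q θ ≤ exp (2 * b * θ ^ 2)) :
    Q.real {ω | s.card * ε ≤ ∑ i ∈ s, X i ω} ≤
      exp (-(ε ^ 2 * s.card) / (8 * b)) + exp (-(ε * s.card) / 4) := by
  have := hindep.isProbabilityMeasure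
  obtain ⟨θ, hθ, hquad⟩ := exists_mem_Icc_quadratic_le_max hb hε
  calc Q.real {ω | s.card * ε ≤ ∑ i ∈ s, X i ω}
      ≤ exp (-θ * (s.card * ε)) * exp (2 * b * θ ^ 2) ^ s.card :=
        measureReal_sum_ge_le_of_mgf_le hindep hmeas s _ hθ.1
          (fun i hi => integrable_exp_mul_of_nonneg_of_le (hint i hi) hθ.1 hθ.2)
          (fun i hi => hmgf i hi θ hθ)
    _ = exp (s.card * (2 * b * θ ^ 2 - θ * ε)) := by
        rw [← exp_nat_mul, ← exp_add]; ring_nf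
    _ ≤ exp (s.card * max (-ε ^ 2 / (8 * b)) (-ε / 4)) := by gcongr
    _ = max (exp (-(ε ^ 2 * s.card) / (8 * b))) (exp (-(ε * s.card) / 4)) := by
        rw [mul_max_of_nonneg _ _ s.card.cast_nonneg, exp_monotone.map_max]
        congr 2 <;> ring
    _ ≤ exp (-(ε ^ 2 * s.card) / (8 * b)) + exp (-(ε * s.card) / 4) :=
        max_le_add_of_nonneg (exp_pos _).le (exp_pos _).le

end

/-- Concentration for i.i.d. random variables with uniformly bounded MGF on `[-1,1]`:
if `E_Q[exp (θ (X 1 - μ))] ≤ b` for all `θ ∈ [-1,1]`, then for every `ε > 0`,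
`Q((1/n) ∑_{i=1}^n (X i - μ) ≥ ε) ≤ exp (-ε² n / (8b)) + exp (-ε n / 4)`. -/
theorem stmt15
    {Ω : Type*} {mΩ : MeasurableSpace Ω} (Q : Measure Ω) [IsProbabilityMeasure Q]
    (n : ℕ) (hn : 1 ≤ n)
    (X : ℕ → Ω → ℝ) (hXmeas : ∀ i, Measurable (X i))
    (hindep : iIndepFun (fun i : Fin n => X (i + 1)) Q)
    (hident : ∀ i ∈ Finset.Icc 1 n, IdentDistrib (X i) (X 1) Q Q)
    (μ : ℝ) (hint : Integrable (X 1) Q) (hμ : μ = ∫ ω, X 1 ω ∂Q)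
    (b : ℝ) (hb : 0 < b)
    (hmgf : ∀ θ ∈ Set.Icc (-1 : ℝ) 1,
      ∫⁻ ω, ENNReal.ofReal (Real.exp (θ * (X 1 ω - μ))) ∂Q ≤ ENNReal.ofReal b) :
    ∀ ε : ℝ, 0 < ε →
      Q {ω | ε ≤ (1 / (n : ℝ)) * ∑ i ∈ Finset.Icc 1 n, (X i ω - μ)} ≤
        ENNReal.ofReal
          (Real.exp (-(ε ^ 2 * n) / (8 * b)) + Real.exp (-(ε * n) / 4)) := by
  intro ε hε
  set Y : Ω → ℝ := fun ω => X 1 ω - μ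
  have hexp_moment : ∀ t ∈ Set.Icc (-1 : ℝ) 1,
      Integrable (fun ω => exp (t * Y ω)) Q ∧ ∫ ω, exp (t * Y ω) ∂Q ≤ b := fun t ht =>
    integrable_and_integral_le_of_lintegral_ofReal_le
      (((hXmeas 1).sub_const μ).const_mul t).exp.aestronglyMeasurable
      (ae_of_all _ fun _ => (exp_pos _).le) hb.le (hmgf t ht)
  obtain ⟨hpos, hpos_le⟩ := hexp_moment 1 (by norm_num)
  obtain ⟨hneg, hneg_le⟩ := hexp_moment (-1) (by norm_num)
  have hmean : ∫ ω, Y ω ∂Q = 0 := by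
    rw [integral_sub hint (integrable_const μ)]; simp [hμ]
  have hmgf_sq : ∀ θ ∈ Set.Icc (0 : ℝ) (1 / 2), mgf Y Q θ ≤ exp (2 * b * θ ^ 2) :=
    fun θ hθ => mgf_le_exp_two_mul_sq (Y := Y) (hint.sub (integrable_const μ)) hmean
      (by simpa only [one_mul] using hpos) (by simpa only [neg_one_mul] using hneg)
      (by simpa only [one_mul] using hpos_le) (by simpa only [neg_one_mul] using hneg_le) hθ.1 hθ.2
  set Z : Fin n → Ω → ℝ := fun i ω => X (i + 1) ω - μ
  have hZ : ∀ i, IdentDistrib (Z i) Y Q Q := fun i =>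
    (hident _ (Finset.mem_Icc.2 ⟨by omega, by omega⟩)).comp (measurable_id.sub_const μ)
  have hZindep : iIndepFun Z Q := hindep.comp _ fun _ => measurable_id.sub_const μ
  have hset : {ω | ε ≤ (1 / (n : ℝ)) * ∑ i ∈ Finset.Icc 1 n, (X i ω - μ)} =
      {ω | (n : ℝ) * ε ≤ ∑ i, Z i ω} := by
    ext ω
    rw [Set.mem_ofPred_eq, Set.mem_ofPred_eq, one_div_mul_eq_div,
      le_div_iff₀' (by exact_mod_cast hn), Finset.sum_Icc_one_eq_sum_fin (fun i => X i ω - μ)]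
  rw [hset, ← ofReal_measureReal]
  refine ENNReal.ofReal_le_ofReal ?_
  simpa only [Finset.card_univ, Fintype.card_fin] using measureReal_sum_ge_le_of_mgf_le_exp_sq
    hZindep (fun i => (hXmeas _).sub_const μ) Finset.univ hb hε
    (fun i _ => (hZ i).comp (measurable_const_mul _).exp |>.integrable_iff.2
      (hexp_moment _ (by norm_num)).1)
    (fun i _ θ hθ => (mgf_congr_of_identDistrib _ _ (hZ i) θ).trans_le (hmgf_sq θ hθ))
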